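/- arXiv:1306.6439 — 2 statements merged into one kernel-verified Lean document; each statement's English description precedes it below -/
import Mathlib

section
/- Let A be an associative algebra and T : A → A a Rota–Baxter operator of any weight θ. Then a ◇ b := [T(a), b] together with the Lie bracket [a,b]_· := θ(ab − ba) gives A the structure of a left post-Lie algebra: (i) a ◇ [b,c]_· = [a ◇ b, c]_· + [b, a ◇ c]_·, and (ii) [a,b]_· ◇ c = a ◇ (b ◇ c) − (a ◇ b) ◇ c − b ◇ (a ◇ c) + (b ◇ a) ◇ c. -/
/-- a ◇ b := [T(a),b] from a weight-θ Rota–Baxter operator. -/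
def rbDiamond {k A : Type*} [Field k] [Ring A] [Algebra k A]
    (T : A →ₗ[k] A) (a b : A) : A :=
  T a * b - b * T a

/-- The Lie bracket [a,b] := θ(ab − ba). -/
def rbBracket {k A : Type*} [Field k] [Ring A] [Algebra k A]
    (θ : k) (a b : A) : A :=
  θ • (a * b - b * a)

/-!
Both operations are ring commutators: `a ◇ b = ⁅T a, b⁆` and `[a, b]_· = θ • ⁅a, b⁆`.
Identity (i) is the Jacobi identity, since `⁅T a, -⁆` is a derivation of the commutator.
For (ii), antisymmetrising the Rota–Baxter identity gives
`T (θ • ⁅a, b⁆) = ⁅T a, T b⁆ - T (a ◇ b) + T (b ◇ a)`,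
and the Jacobi identity turns `⁅⁅T a, T b⁆, c⁆` into `a ◇ (b ◇ c) - b ◇ (a ◇ c)`.
-/

section Commutator

variable {k A : Type*} [CommRing k] [Ring A] [Algebra k A]

theorem Ring.lie_smul (θ : k) (x y : A) : ⁅x, θ • y⁆ = θ • ⁅x, y⁆ := by
  rw [Ring.lie_def, Ring.lie_def, mul_smul_comm, smul_mul_assoc, smul_sub]

def IsRotaBaxter (θ : k) (T : A →ₗ[k] A) : Prop :=
  ∀ a b : A, T a * T b = T (T a * b + a * T b + θ • (a * b))

namespace IsRotaBaxter

variable {θ : k} {T : A →ₗ[k] A}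

theorem map_smul_mul (hT : IsRotaBaxter θ T) (a b : A) :
    T (θ • (a * b)) = T a * T b - T (T a * b) - T (a * T b) := by
  rw [hT a b, map_add, map_add]
  abel

theorem map_smul_lie (hT : IsRotaBaxter θ T) (a b : A) :
    T (θ • ⁅a, b⁆) = ⁅T a, T b⁆ - T ⁅T a, b⁆ + T ⁅T b, a⁆ := by
  simp only [Ring.lie_def, smul_sub, map_sub, hT.map_smul_mul]
  abel

end IsRotaBaxter

end Commutator

section PostLie

attribute [local instance] LieRing.ofAssociativeRing

variable {k A : Type*} [Field k] [Ring A] [Algebra k A]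

theorem rbDiamond_eq_lie (T : A →ₗ[k] A) (a b : A) : rbDiamond T a b = ⁅T a, b⁆ :=
  (Ring.lie_def _ _).symm

theorem rbBracket_eq_smul_lie (θ : k) (a b : A) : rbBracket θ a b = θ • ⁅a, b⁆ := by
  rw [rbBracket, Ring.lie_def]

theorem rbDiamond_rbBracket (θ : k) (T : A →ₗ[k] A) (a b c : A) :
    rbDiamond T a (rbBracket θ b c)
      = rbBracket θ (rbDiamond T a b) c + rbBracket θ b (rbDiamond T a c) := by
  simp only [rbDiamond_eq_lie, rbBracket_eq_smul_lie]
  rw [← smul_add, ← leibniz_lie, Ring.lie_smul]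

theorem rbBracket_rbDiamond {θ : k} {T : A →ₗ[k] A} (hT : IsRotaBaxter θ T) (a b c : A) :
    rbDiamond T (rbBracket θ a b) c
      = rbDiamond T a (rbDiamond T b c) - rbDiamond T (rbDiamond T a b) c
        - rbDiamond T b (rbDiamond T a c) + rbDiamond T (rbDiamond T b a) c := by
  simp only [rbDiamond_eq_lie, rbBracket_eq_smul_lie]
  rw [hT.map_smul_lie, add_lie, sub_lie, lie_lie]
  abel

end PostLie

theorem rotaBaxter_postLie_general {k A : Type*} [Field k] [Ring A] [Algebra k A]
    (θ : k) (T : A →ₗ[k] A)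
    (hRB : ∀ a b : A, T a * T b = T (T a * b + a * T b + θ • (a * b))) :
    ∀ a b c : A,
      (rbDiamond T a (rbBracket (A := A) θ b c)
        = rbBracket (A := A) θ (rbDiamond T a b) c + rbBracket (A := A) θ b (rbDiamond T a c)) ∧
      (rbDiamond T (rbBracket (A := A) θ a b) c
        = rbDiamond T a (rbDiamond T b c) - rbDiamond T (rbDiamond T a b) c
          - rbDiamond T b (rbDiamond T a c) + rbDiamond T (rbDiamond T b a) c) :=
  fun a b c => ⟨rbDiamond_rbBracket θ T a b c, rbBracket_rbDiamond hRB a b c⟩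

/-- A Rota–Baxter operator of weight θ yields a left post-Lie algebra structure. -/
theorem rotaBaxter_postLie {k A : Type*} [Field k] [CharZero k] [Ring A] [Algebra k A]
    (θ : k) (T : A →ₗ[k] A)
    (hRB : ∀ a b : A, T a * T b = T (T a * b + a * T b + θ • (a * b))) :
    ∀ a b c : A,
      (rbDiamond T a (rbBracket (A := A) θ b c)
        = rbBracket (A := A) θ (rbDiamond T a b) c + rbBracket (A := A) θ b (rbDiamond T a c)) ∧
      (rbDiamond T (rbBracket (A := A) θ a b) c
        = rbDiamond T a (rbDiamond T b c) - rbDiamond T (rbDiamond T a b) c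
          - rbDiamond T b (rbDiamond T a c) + rbDiamond T (rbDiamond T b a) c) :=
  rotaBaxter_postLie_general θ T hRB
end

section
/- With notation as before, the subset T_σ(N) ⋉ T_τ(N) := {(s̲, t̲) ∈ T_σ(N) × T_τ(N) : min s̲ < min t̲} equals the disjoint union of T_{FG}(N) over all pairs (F, G) with std(F) = σ, std(G) = τ, FG standard, and max F > max G. -/
/-!
A point `u = (s, t)` lies on exactly one partial diagonal `T_ρ(N)` with `ρ` standard: `ρ` ranks
the coordinates of `u` from the top. So the only candidate pair is `(F, G)` = the two blocks of
this `ρ`; its blocks have the order types of `s` and `t`, hence std(F) = σ and std(G) = τ, and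
max F > max G says exactly that some coordinate of `s` lies below every coordinate of `t`.
Conversely, the blocks of a point of `T_{FG}(N)` lie on `T_F(N) = T_σ(N)` and `T_G(N) = T_τ(N)`.
-/

/-- σ is a standard map, i.e. a surjection onto some initial interval {1,…,r}. -/
def IsStandard {n : ℕ} (σ : Fin n → ℕ) : Prop :=
  ∃ r : ℕ, 1 ≤ r ∧ Set.range σ = Set.Icc 1 r

/-- F takes positive values and its standardization is σ. -/
def StdEq {n : ℕ} (F σ : Fin n → ℕ) : Prop :=
  (∀ i, 1 ≤ F i) ∧ ∀ i j, (F i < F j ↔ σ i < σ j)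

/-- The point s of the hypercube {0,…,N−1}^n lies on the partial diagonal T_σ(N). -/
def InDiag {n : ℕ} (N : ℕ) (σ : Fin n → ℕ) (s : Fin n → ℕ) : Prop :=
  (∀ i, s i < N) ∧ ∀ i j, (s j < s i ↔ σ i < σ j) ∧ (s i = s j ↔ σ i = σ j)

open Finset

/-- Labels of the partial diagonals decrease as the coordinates increase, so a point is
standardized by ranking its coordinates from the top. -/
def rankFromTop (S : Finset ℕ) (x : ℕ) : ℕ := 1 + #{y ∈ S | x < y}

lemma one_le_rankFromTop (S : Finset ℕ) (x : ℕ) : 1 ≤ rankFromTop S x := Nat.le_add_right 1 _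

lemma rankFromTop_antitone (S : Finset ℕ) : Antitone (rankFromTop S) := fun _ _ hxy =>
  Nat.add_le_add_left (card_le_card fun _ hz => by
    simp only [mem_filter] at hz ⊢; exact ⟨hz.1, hxy.trans_lt hz.2⟩) 1

lemma rankFromTop_lt_rankFromTop {S : Finset ℕ} {x y : ℕ} (hx : x ∈ S) (hyx : y < x) :
    rankFromTop S x < rankFromTop S y := by
  have hsub : {z ∈ S | x < z} ⊂ {z ∈ S | y < z} := by
    refine (ssubset_iff_of_subset fun z hz => ?_).2 ⟨x, ?_, ?_⟩
    · simp only [mem_filter] at hz ⊢; exact ⟨hz.1, hyx.trans hz.2⟩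
    · simpa only [mem_filter] using ⟨hx, hyx⟩
    · simp
  exact Nat.add_lt_add_left (card_lt_card hsub) 1

lemma rankFromTop_lt_rankFromTop_iff {S : Finset ℕ} {x y : ℕ} (hx : x ∈ S) :
    rankFromTop S x < rankFromTop S y ↔ y < x :=
  ⟨fun h => lt_of_not_ge fun hxy => (rankFromTop_antitone S hxy).not_gt h,
    rankFromTop_lt_rankFromTop hx⟩

lemma rankFromTop_inj {S : Finset ℕ} {x y : ℕ} (hx : x ∈ S) (hy : y ∈ S) :
    rankFromTop S x = rankFromTop S y ↔ x = y := by
  refine ⟨fun h => le_antisymm ?_ ?_, congrArg _⟩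
  · exact not_lt.1 fun hyx => (rankFromTop_lt_rankFromTop hx hyx).ne h
  · exact not_lt.1 fun hxy => (rankFromTop_lt_rankFromTop hy hxy).ne h.symm

lemma rankFromTop_le_card {S : Finset ℕ} {x : ℕ} (hx : x ∈ S) : rankFromTop S x ≤ #S := by
  have hsub : {z ∈ S | x < z} ⊂ S := filter_ssubset.2 ⟨x, hx, lt_irrefl x⟩
  exact Nat.one_add_le_iff.2 (card_lt_card hsub)

lemma image_rankFromTop (S : Finset ℕ) : S.image (rankFromTop S) = Icc 1 #S := by
  refine eq_of_subset_of_card_le (fun v hv => ?_) ?_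
  · obtain ⟨x, hx, rfl⟩ := mem_image.1 hv
    exact mem_Icc.2 ⟨one_le_rankFromTop S x, rankFromTop_le_card hx⟩
  · rw [Nat.card_Icc, card_image_of_injOn fun x hx y hy h => (rankFromTop_inj hx hy).1 h]
    omega

/-- The standard map `ρ` with `u ∈ T_ρ(N)`. -/
def revStd {k : ℕ} (u : Fin k → ℕ) : Fin k → ℕ := fun i => rankFromTop (univ.image u) (u i)

section revStd

variable {k : ℕ} (u : Fin k → ℕ)

lemma one_le_revStd (i : Fin k) : 1 ≤ revStd u i := one_le_rankFromTop _ _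

lemma revStd_lt_revStd_iff (i j : Fin k) : revStd u i < revStd u j ↔ u j < u i :=
  rankFromTop_lt_rankFromTop_iff (mem_image_of_mem u (mem_univ i))

lemma revStd_eq_revStd_iff (i j : Fin k) : revStd u i = revStd u j ↔ u i = u j :=
  rankFromTop_inj (mem_image_of_mem u (mem_univ i)) (mem_image_of_mem u (mem_univ j))

lemma isStandard_revStd (i₀ : Fin k) : IsStandard (revStd u) := by
  refine ⟨#(univ.image u), card_pos.2 ⟨u i₀, mem_image_of_mem u (mem_univ i₀)⟩, ?_⟩
  rw [← coe_Icc, ← image_rankFromTop, image_image, coe_image, coe_univ, Set.image_univ]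
  rfl

lemma inDiag_revStd {N : ℕ} (hu : ∀ i, u i < N) : InDiag N (revStd u) u :=
  ⟨hu, fun i j => ⟨(revStd_lt_revStd_iff u i j).symm, (revStd_eq_revStd_iff u i j).symm⟩⟩

end revStd

lemma IsStandard.one_le {k : ℕ} {ρ : Fin k → ℕ} (hρ : IsStandard ρ) (i : Fin k) : 1 ≤ ρ i := by
  obtain ⟨r, -, hr⟩ := hρ
  exact (hr ▸ Set.mem_range_self i : ρ i ∈ Set.Icc 1 r).1

lemma IsStandard.le_of_lt_iff_lt {k : ℕ} {ρ ρ' : Fin k → ℕ} (hρ : IsStandard ρ)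
    (h1 : ∀ i, 1 ≤ ρ' i) (hord : ∀ i j, ρ i < ρ j ↔ ρ' i < ρ' j) (i : Fin k) : ρ i ≤ ρ' i := by
  obtain ⟨r, -, hr⟩ := hρ
  induction hv : ρ i using Nat.strong_induction_on generalizing i with
  | _ v ih =>
    subst hv
    obtain hρi | hρi := Nat.lt_or_ge (ρ i) 2
    · have := h1 i; omega
    -- no gaps in the values of `ρ`: `ρ i - 1 = ρ j`, and `ρ' i > ρ' j ≥ ρ j` by induction
    obtain ⟨j, hj⟩ : ρ i - 1 ∈ Set.range ρ := by
      have hi : ρ i ∈ Set.Icc 1 r := hr ▸ Set.mem_range_self i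
      rw [hr]; exact ⟨by omega, by have := hi.2; omega⟩
    have hji : ρ j < ρ i := by omega
    have := (hord j i).1 hji
    have := ih (ρ j) hji j rfl
    omega

lemma IsStandard.eq_of_lt_iff_lt {k : ℕ} {ρ ρ' : Fin k → ℕ} (hρ : IsStandard ρ)
    (hρ' : IsStandard ρ') (hord : ∀ i j, ρ i < ρ j ↔ ρ' i < ρ' j) : ρ = ρ' := by
  funext i
  exact le_antisymm (hρ.le_of_lt_iff_lt hρ'.one_le hord i)
    (hρ'.le_of_lt_iff_lt hρ.one_le (fun i j => (hord i j).symm) i)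

lemma InDiag.eq_revStd {k N : ℕ} {ρ u : Fin k → ℕ} (hρ : IsStandard ρ) (h : InDiag N ρ u)
    (i₀ : Fin k) : ρ = revStd u :=
  hρ.eq_of_lt_iff_lt (isStandard_revStd u i₀) fun i j => by
    rw [revStd_lt_revStd_iff, (h.2 i j).1]

lemma Fin.append_inj {α : Type*} {n m : ℕ} {F F' : Fin n → α} {G G' : Fin m → α} :
    Fin.append F G = Fin.append F' G' ↔ F = F' ∧ G = G' := by
  refine ⟨fun h => ⟨funext fun i => ?_, funext fun j => ?_⟩, fun ⟨hF, hG⟩ => hF ▸ hG ▸ rfl⟩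
  · simpa using congrFun h (Fin.castAdd m i)
  · simpa using congrFun h (Fin.natAdd n j)

section append

variable {n m N : ℕ} {F s : Fin n → ℕ} {G t : Fin m → ℕ}

lemma InDiag.of_append_left (h : InDiag N (Fin.append F G) (Fin.append s t)) : InDiag N F s :=
  ⟨fun i => by simpa using h.1 (Fin.castAdd m i),
    fun i j => by simpa using h.2 (Fin.castAdd m i) (Fin.castAdd m j)⟩

lemma InDiag.of_append_right (h : InDiag N (Fin.append F G) (Fin.append s t)) : InDiag N G t :=
  ⟨fun i => by simpa using h.1 (Fin.natAdd n i),
    fun i j => by simpa using h.2 (Fin.natAdd n i) (Fin.natAdd n j)⟩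

end append

section stdEq

variable {k N : ℕ} {F σ s : Fin k → ℕ}

lemma StdEq.eq_iff_eq (hF : StdEq F σ) (i j : Fin k) : F i = F j ↔ σ i = σ j := by
  simp only [le_antisymm_iff, ← not_lt, hF.2]

lemma InDiag.of_stdEq (h : InDiag N F s) (hF : StdEq F σ) : InDiag N σ s :=
  ⟨h.1, fun i j => ⟨(h.2 i j).1.trans (hF.2 i j), (h.2 i j).2.trans (hF.eq_iff_eq i j)⟩⟩

lemma InDiag.stdEq (hF : InDiag N F s) (hσ : InDiag N σ s) (h1 : ∀ i, 1 ≤ F i) : StdEq F σ :=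
  ⟨h1, fun i j => (hF.2 i j).1.symm.trans (hσ.2 i j).1⟩

end stdEq

theorem diag_product_ltimes_general (n m N : ℕ)
    (σ : Fin n → ℕ) (τ : Fin m → ℕ)
    (s : Fin n → ℕ) (t : Fin m → ℕ) :
    (InDiag N σ s ∧ InDiag N τ t ∧ (∃ i : Fin n, ∀ j : Fin m, s i < t j)) ↔
      ∃! FG : (Fin n → ℕ) × (Fin m → ℕ),
        StdEq FG.1 σ ∧ StdEq FG.2 τ ∧ IsStandard (Fin.append FG.1 FG.2) ∧
        (∃ i : Fin n, ∀ j : Fin m, FG.2 j < FG.1 i) ∧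
        InDiag N (Fin.append FG.1 FG.2) (Fin.append s t) := by
  constructor
  · rintro ⟨hs, ht, i₀, hi₀⟩
    set u := Fin.append s t
    have hu : InDiag N (revStd u) u := inDiag_revStd u fun k => Fin.addCases
      (fun i => by simpa [u] using hs.1 i) (fun j => by simpa [u] using ht.1 j) k
    have happ : Fin.append (revStd u ∘ Fin.castAdd m) (revStd u ∘ Fin.natAdd n) = revStd u :=
      Fin.append_castAdd_natAdd
    refine ⟨(revStd u ∘ Fin.castAdd m, revStd u ∘ Fin.natAdd n), ⟨?_, ?_, ?_, ?_, ?_⟩, ?_⟩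
    · exact (happ ▸ hu).of_append_left.stdEq hs fun _ => one_le_revStd _ _
    · exact (happ ▸ hu).of_append_right.stdEq ht fun _ => one_le_revStd _ _
    · rw [happ]; exact isStandard_revStd u (Fin.castAdd m i₀)
    · exact ⟨i₀, fun j => (revStd_lt_revStd_iff u _ _).2 (by simpa [u] using hi₀ j)⟩
    · rwa [happ]
    · rintro ⟨F, G⟩ ⟨-, -, hstd, -, hdiag⟩
      have h := hdiag.eq_revStd hstd (Fin.castAdd m i₀)
      rw [← happ] at h
      obtain ⟨rfl, rfl⟩ := Fin.append_inj.1 h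
      rfl
  · rintro ⟨⟨F, G⟩, ⟨hF, hG, -, ⟨i₀, hmax⟩, hdiag⟩, -⟩
    refine ⟨?_, ?_, i₀, fun j => ?_⟩
    · exact hdiag.of_append_left.of_stdEq hF
    · exact hdiag.of_append_right.of_stdEq hG
    · simpa using (hdiag.2 (Fin.natAdd n j) (Fin.castAdd m i₀)).1.2 (by simpa using hmax j)

/-- T_σ(N) ⋉ T_τ(N) = {(s,t) : min s < min t} is the disjoint union of the T_{FG}(N)
over pairs (F,G) with std(F) = σ, std(G) = τ, FG standard and max F > max G. -/
theorem diag_product_ltimes (n m N : ℕ) (hn : 1 ≤ n) (hm : 1 ≤ m) (hN : n + m ≤ N)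
    (σ : Fin n → ℕ) (τ : Fin m → ℕ) (hσ : IsStandard σ) (hτ : IsStandard τ)
    (s : Fin n → ℕ) (t : Fin m → ℕ) :
    (InDiag N σ s ∧ InDiag N τ t ∧ (∃ i : Fin n, ∀ j : Fin m, s i < t j)) ↔
      ∃! FG : (Fin n → ℕ) × (Fin m → ℕ),
        StdEq FG.1 σ ∧ StdEq FG.2 τ ∧ IsStandard (Fin.append FG.1 FG.2) ∧
        (∃ i : Fin n, ∀ j : Fin m, FG.2 j < FG.1 i) ∧
        InDiag N (Fin.append FG.1 FG.2) (Fin.append s t) :=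
  diag_product_ltimes_general n m N σ τ s t
end
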